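/- For X ~ Poisson(λ) and integers a, b ≥ 2, there exists an absolute constant c > 0 such that E[X·√(min(X,a)·min(X,b))·1(X ≥ 4)] ≥ c·min(λ·√(min(λ,a)·min(λ,b)), λ^4). -/

import Mathlib

open ProbabilityTheory Real
open scoped NNReal

/-- Expectation of `f X` for `X ~ Poisson(r)`. -/
noncomputable def pev (r : ℝ≥0) (f : ℕ → ℝ) : ℝ :=
  ∑' x : ℕ, f x * poissonPMFReal r x

/-- Variance of `f X` for `X ~ Poisson(r)`. -/
noncomputable def pvar (r : ℝ≥0) (f : ℕ → ℝ) : ℝ :=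
  pev r (fun x => f x ^ 2) - (pev r f) ^ 2

/-- The function `x ↦ x √(min(x,a) min(x,b)) 1(x ≥ 4)`. -/
noncomputable def fab (a b : ℝ) (x : ℕ) : ℝ :=
  if 4 ≤ x then (x : ℝ) * Real.sqrt (min (x : ℝ) a * min (x : ℝ) b) else 0


lemma sum4 (r : ℝ≥0) : Summable (fun x : ℕ => (4:ℝ)^x * poissonPMFReal r x) := by
  have h := ((Real.summable_pow_div_factorial (4 * r)).mul_left (Real.exp (-r)))
  apply h.congr
  intro x
  unfold poissonPMFReal
  rw [mul_pow]
  ring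

lemma dom_summable (r : ℝ≥0) {g : ℕ → ℝ} (h0 : ∀ x, 0 ≤ g x) (h1 : ∀ x, g x ≤ (4:ℝ)^x) :
    Summable (fun x : ℕ => g x * poissonPMFReal r x) := by
  refine Summable.of_nonneg_of_le (fun x => mul_nonneg (h0 x) poissonPMFReal_nonneg)
    (fun x => ?_) (sum4 r)
  exact mul_le_mul_of_nonneg_right (h1 x) poissonPMFReal_nonneg

lemma nat_le_four_pow (x : ℕ) : (x : ℝ) ≤ 4 ^ x := by
  calc (x:ℝ) ≤ 2 ^ x := by exact_mod_cast (Nat.lt_two_pow_self (n := x)).le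
  _ ≤ 4 ^ x := by gcongr; norm_num

lemma M1 (r : ℝ≥0) : HasSum (fun x : ℕ => (x:ℝ) * poissonPMFReal r x) r := by
  have h : HasSum (fun n : ℕ => ((n+1:ℕ):ℝ) * poissonPMFReal r (n+1)) r := by
    have h0 := (poissonPMFRealSum r).mul_left (r:ℝ)
    rw [mul_one] at h0
    have e : (fun n : ℕ => ((n+1:ℕ):ℝ) * poissonPMFReal r (n+1)) =
        fun n : ℕ => (r:ℝ) * poissonPMFReal r n := by
      funext n
      unfold poissonPMFReal
      rw [Nat.factorial_succ]
      push_cast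
      have h1 : ((n:ℝ)+1) ≠ 0 := by positivity
      have h2 : (n.factorial : ℝ) ≠ 0 := by positivity
      field_simp
      ring
    rw [e]; exact h0
  have h2 := (hasSum_nat_add_iff (f := fun x : ℕ => (x:ℝ) * poissonPMFReal r x) 1).mp h
  simpa using h2

lemma M2 (r : ℝ≥0) : HasSum (fun x : ℕ => (x:ℝ) * ((x:ℝ)-1) * poissonPMFReal r x) ((r:ℝ)^2) := by
  have h : HasSum (fun n : ℕ => ((n+2:ℕ):ℝ) * (((n+2:ℕ):ℝ)-1) * poissonPMFReal r (n+2)) ((r:ℝ)^2) := by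
    have h0 := (poissonPMFRealSum r).mul_left ((r:ℝ)^2)
    rw [mul_one] at h0
    have e : (fun n : ℕ => ((n+2:ℕ):ℝ) * (((n+2:ℕ):ℝ)-1) * poissonPMFReal r (n+2)) =
        fun n : ℕ => (r:ℝ)^2 * poissonPMFReal r n := by
      funext n
      unfold poissonPMFReal
      have e2 : n + 2 = (n+1) + 1 := rfl
      rw [e2, Nat.factorial_succ, Nat.factorial_succ]
      push_cast
      have h1 : ((n:ℝ)+1) ≠ 0 := by positivity
      have h2 : ((n:ℝ)+1+1) ≠ 0 := by positivity
      have h3 : (n.factorial : ℝ) ≠ 0 := by positivity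
      field_simp
      ring
    rw [e]; exact h0
  have h2 := (hasSum_nat_add_iff (f := fun x : ℕ => (x:ℝ) * ((x:ℝ)-1) * poissonPMFReal r x) 2).mp h
  simpa [Finset.sum_range_succ] using h2

lemma var_sum (r : ℝ≥0) : HasSum (fun x : ℕ => ((x:ℝ) - r)^2 * poissonPMFReal r x) r := by
  have h := (M2 r).add (((M1 r).mul_left (1 - 2*(r:ℝ))).add ((poissonPMFRealSum r).mul_left ((r:ℝ)^2)))
  have e1 : (fun x : ℕ => ((x:ℝ) - r)^2 * poissonPMFReal r x) =
      fun x : ℕ => (x:ℝ) * ((x:ℝ)-1) * poissonPMFReal r x +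
        ((1 - 2*(r:ℝ)) * ((x:ℝ) * poissonPMFReal r x) + (r:ℝ)^2 * poissonPMFReal r x) := by
    funext x; ring
  have h' : HasSum (fun x : ℕ => ((x:ℝ) - r)^2 * poissonPMFReal r x)
      ((r:ℝ)^2 + ((1 - 2*(r:ℝ)) * r + (r:ℝ)^2 * 1)) := by rw [e1]; exact h
  have e2 : ((r:ℝ)^2 + ((1 - 2*(r:ℝ)) * r + (r:ℝ)^2 * 1)) = (r:ℝ) := by ring
  rw [e2] at h'; exact h'

lemma fab_nonneg (a b : ℝ) (x : ℕ) : 0 ≤ fab a b x := by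
  unfold fab; split
  · positivity
  · exact le_refl 0

lemma fab_summable (r : ℝ≥0) (a b : ℝ) (ha : 0 ≤ a) (hb : 0 ≤ b) :
    Summable (fun x : ℕ => fab a b x * poissonPMFReal r x) := by
  have hs := (sum4 r).mul_left (Real.sqrt (a * b))
  refine Summable.of_nonneg_of_le
    (fun x => mul_nonneg (fab_nonneg a b x) poissonPMFReal_nonneg) (fun x => ?_) hs
  have hb1 : fab a b x ≤ Real.sqrt (a*b) * 4 ^ x := by
    unfold fab; split
    · have h1 : min (x:ℝ) a * min (x:ℝ) b ≤ a * b := by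
        apply mul_le_mul (min_le_right _ _) (min_le_right _ _) (le_min (by positivity) hb) ha
      calc (x:ℝ) * Real.sqrt (min (x:ℝ) a * min (x:ℝ) b)
          ≤ 4 ^ x * Real.sqrt (a*b) := by
            apply mul_le_mul (nat_le_four_pow x) (Real.sqrt_le_sqrt h1) (Real.sqrt_nonneg _)
              (by positivity)
        _ = Real.sqrt (a*b) * 4 ^ x := by ring
    · positivity
  calc fab a b x * poissonPMFReal r x ≤ (Real.sqrt (a*b) * 4 ^ x) * poissonPMFReal r x :=
        mul_le_mul_of_nonneg_right hb1 poissonPMFReal_nonneg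
    _ = Real.sqrt (a*b) * (4 ^ x * poissonPMFReal r x) := by ring

lemma sqrt_four' : Real.sqrt 4 = 2 := by
  rw [show (4:ℝ) = 2^2 by norm_num, Real.sqrt_sq (by norm_num : (0:ℝ) ≤ 2)]

theorem stmt_15 :
    ∃ c : ℝ, 0 < c ∧ ∀ (r : ℝ≥0) (a b : ℕ), 2 ≤ a → 2 ≤ b →
      pev r (fab a b) ≥
        c * min ((r : ℝ) * Real.sqrt (min (r : ℝ) a * min (r : ℝ) b)) ((r : ℝ) ^ 4) := by
  refine ⟨Real.exp (-8) / 3, by positivity, ?_⟩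
  intro r a b ha hb
  have hc8 : Real.exp (-8) / 3 ≤ 1/8 := by
    have h9 : (9:ℝ) ≤ Real.exp 8 := by have := Real.add_one_le_exp (8:ℝ); linarith
    have hmul : Real.exp (-8) * Real.exp 8 = 1 := by rw [← Real.exp_add]; norm_num
    nlinarith [Real.exp_pos (-8:ℝ)]
  have ha' : (2:ℝ) ≤ (a:ℕ) := by exact_mod_cast ha
  have hb' : (2:ℝ) ≤ (b:ℕ) := by exact_mod_cast hb
  set p : ℕ → ℝ := poissonPMFReal r with hp
  set M : ℝ := min (r:ℝ) a * min (r:ℝ) b with hM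
  have hM0 : 0 ≤ M := mul_nonneg (le_min r.2 (by positivity)) (le_min r.2 (by positivity))
  have hfs := fab_summable r a b (by positivity) (by positivity)
  have hfnn : ∀ x, 0 ≤ fab a b x * p x :=
    fun x => mul_nonneg (fab_nonneg _ _ x) poissonPMFReal_nonneg
  rcases lt_or_ge (r:ℝ) 8 with hr | hr
  · -- small r case : single term at x = 4
    have hterm : fab a b 4 * p 4 ≤ pev r (fab a b) := by
      exact Summable.le_tsum hfs 4 (fun j _ => hfnn j)
    have hfab4 : (8:ℝ) ≤ fab a b 4 := by
      unfold fab
      rw [if_pos (le_refl 4)]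
      push_cast
      have h2a : (2:ℝ) ≤ min (4:ℝ) a := le_min (by norm_num) ha'
      have h2b : (2:ℝ) ≤ min (4:ℝ) b := le_min (by norm_num) hb'
      have h4 : (4:ℝ) ≤ min (4:ℝ) a * min (4:ℝ) b := by nlinarith
      have h2s : (2:ℝ) ≤ Real.sqrt (min (4:ℝ) a * min (4:ℝ) b) := by
        rw [← sqrt_four']; exact Real.sqrt_le_sqrt h4
      nlinarith [Real.sqrt_nonneg (min (4:ℝ) a * min (4:ℝ) b)]
    have hp4 : Real.exp (-8) * (r:ℝ)^4 / 24 ≤ p 4 := by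
      rw [hp]
      unfold poissonPMFReal
      have : Real.exp (-8) ≤ Real.exp (-(r:ℝ)) := Real.exp_le_exp.mpr (by linarith)
      have hr4 : (0:ℝ) ≤ (r:ℝ)^4 := by positivity
      rw [show (Nat.factorial 4 : ℝ) = 24 by norm_num [Nat.factorial]]
      calc Real.exp (-8) * (r:ℝ)^4 / 24 ≤ Real.exp (-(r:ℝ)) * (r:ℝ)^4 / 24 := by
            apply div_le_div_of_nonneg_right ?_ (by norm_num)
            exact mul_le_mul_of_nonneg_right this hr4
        _ = Real.exp (-(r:ℝ)) * (r:ℝ)^4 / 24 := rfl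
    have hminle : min ((r:ℝ) * Real.sqrt M) ((r:ℝ)^4) ≤ (r:ℝ)^4 := min_le_right _ _
    have hp4nn : 0 ≤ p 4 := poissonPMFReal_nonneg
    calc Real.exp (-8)/3 * min ((r:ℝ) * Real.sqrt M) ((r:ℝ)^4)
        ≤ Real.exp (-8)/3 * (r:ℝ)^4 := by
          apply mul_le_mul_of_nonneg_left hminle (by positivity)
      _ = 8 * (Real.exp (-8) * (r:ℝ)^4 / 24) := by ring
      _ ≤ 8 * p 4 := by linarith
      _ ≤ fab a b 4 * p 4 := by nlinarith
      _ ≤ pev r (fab a b) := hterm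
  · -- large r case : Chebyshev
    have hrpos : (0:ℝ) < r := by linarith
    set g : ℕ → ℝ := fun x => if (r:ℝ) ≤ 2*(x:ℝ) then p x else 0 with hg
    set bad : ℕ → ℝ := fun x => if (r:ℝ) ≤ 2*(x:ℝ) then 0 else p x with hbad
    have hsum_p : Summable p := (poissonPMFRealSum r).summable
    have hg_s : Summable g := by
      refine Summable.of_nonneg_of_le (fun x => ?_) (fun x => ?_) hsum_p
      · rw [hg]; dsimp only; split <;> [exact poissonPMFReal_nonneg; exact le_refl 0]
      · rw [hg]; dsimp only; split <;> [exact le_refl _; exact poissonPMFReal_nonneg]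
    have hbad_s : Summable bad := by
      refine Summable.of_nonneg_of_le (fun x => ?_) (fun x => ?_) hsum_p
      · rw [hbad]; dsimp only; split <;> [exact le_refl 0; exact poissonPMFReal_nonneg]
      · rw [hbad]; dsimp only; split <;> [exact poissonPMFReal_nonneg; exact le_refl _]
    have hsplit : (∑' x, g x) + (∑' x, bad x) = 1 := by
      rw [← Summable.tsum_add hg_s hbad_s]
      rw [show (fun x => g x + bad x) = p by
        funext x; rw [hg, hbad]; dsimp only; split <;> ring]
      exact (poissonPMFRealSum r).tsum_eq
    have hvar := var_sum r
    have hbad_le : (∑' x, bad x) ≤ 1/2 := by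
      have hterm : ∀ x : ℕ, bad x ≤ (4/(r:ℝ)^2) * (((x:ℝ) - r)^2 * p x) := by
        intro x
        rw [hbad]; dsimp only
        split
        · exact mul_nonneg (by positivity) (mul_nonneg (sq_nonneg _) poissonPMFReal_nonneg)
        · rename_i hx
          push_neg at hx
          have h1 : ((x:ℝ) - r)^2 ≥ (r:ℝ)^2/4 := by nlinarith
          have hpnn : 0 ≤ p x := poissonPMFReal_nonneg
          have h2 : (1:ℝ) ≤ (4/(r:ℝ)^2) * ((x:ℝ) - r)^2 := by
            rw [ge_iff_le, div_le_iff₀ (by norm_num : (0:ℝ) < 4)] at h1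
            rw [div_mul_eq_mul_div, le_div_iff₀ (by positivity)]
            nlinarith
          calc p x = 1 * p x := (one_mul _).symm
            _ ≤ ((4/(r:ℝ)^2) * ((x:ℝ) - r)^2) * p x := mul_le_mul_of_nonneg_right h2 hpnn
            _ = (4/(r:ℝ)^2) * (((x:ℝ) - r)^2 * p x) := by ring
      have hsum2 : Summable (fun x : ℕ => (4/(r:ℝ)^2) * (((x:ℝ) - r)^2 * p x)) :=
        hvar.summable.mul_left _
      calc (∑' x, bad x) ≤ ∑' x : ℕ, (4/(r:ℝ)^2) * (((x:ℝ) - r)^2 * p x) :=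
            Summable.tsum_le_tsum hterm hbad_s hsum2
        _ = (4/(r:ℝ)^2) * (r:ℝ) := by rw [tsum_mul_left, hp, hvar.tsum_eq]
        _ = 4/(r:ℝ) := by field_simp
        _ ≤ 1/2 := by rw [div_le_div_iff₀ hrpos (by norm_num)]; linarith
    have hg_ge : (1:ℝ)/2 ≤ ∑' x, g x := by linarith
    -- pointwise lower bound
    have hpoint : ∀ x : ℕ, ((r:ℝ)/4 * Real.sqrt M) * g x ≤ fab a b x * p x := by
      intro x
      rw [hg]; dsimp only
      split
      · rename_i hx
        have hx4 : (4:ℕ) ≤ x := by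
          have : (4:ℝ) ≤ (x:ℝ) := by linarith
          exact_mod_cast this
        have hxr : (r:ℝ)/2 ≤ (x:ℝ) := by linarith
        have hma : min (r:ℝ) a / 2 ≤ min (x:ℝ) a :=
          le_min (by linarith [min_le_left (r:ℝ) (a:ℝ)])
            (by linarith [min_le_right (r:ℝ) (a:ℝ)])
        have hmb : min (r:ℝ) b / 2 ≤ min (x:ℝ) b :=
          le_min (by linarith [min_le_left (r:ℝ) (b:ℝ)])
            (by linarith [min_le_right (r:ℝ) (b:ℝ)])
        have hmanng : 0 ≤ min (r:ℝ) a / 2 := by positivity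
        have hmbnng : 0 ≤ min (r:ℝ) b / 2 := by positivity
        have hprod : M / 4 ≤ min (x:ℝ) a * min (x:ℝ) b := by
          have := mul_le_mul hma hmb hmbnng (hmanng.trans hma)
          rw [hM]; nlinarith
        have hsq : Real.sqrt M / 2 ≤ Real.sqrt (min (x:ℝ) a * min (x:ℝ) b) := by
          have h1 : Real.sqrt (M/4) ≤ Real.sqrt (min (x:ℝ) a * min (x:ℝ) b) :=
            Real.sqrt_le_sqrt hprod
          rw [show M/4 = M * (1/2)^2 by ring,
            Real.sqrt_mul hM0, Real.sqrt_sq (by norm_num : (0:ℝ) ≤ 1/2)] at h1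
          linarith
        have hfabx : (r:ℝ)/4 * Real.sqrt M ≤ fab a b x := by
          unfold fab
          rw [if_pos hx4]
          have hs0 : 0 ≤ Real.sqrt M := Real.sqrt_nonneg _
          calc (r:ℝ)/4 * Real.sqrt M = ((r:ℝ)/2) * (Real.sqrt M / 2) := by ring
            _ ≤ (x:ℝ) * Real.sqrt (min (x:ℝ) a * min (x:ℝ) b) :=
                mul_le_mul hxr hsq (by positivity) (by positivity)
        exact mul_le_mul_of_nonneg_right hfabx poissonPMFReal_nonneg
      · rw [mul_zero]; exact hfnn x
    have hmain : ((r:ℝ)/4 * Real.sqrt M) * (∑' x, g x) ≤ pev r (fab a b) := by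
      rw [← tsum_mul_left]
      exact Summable.tsum_le_tsum hpoint (hg_s.mul_left _) hfs
    have hcst : 0 ≤ (r:ℝ)/4 * Real.sqrt M := by positivity
    have hminle : min ((r:ℝ) * Real.sqrt M) ((r:ℝ)^4) ≤ (r:ℝ) * Real.sqrt M := min_le_left _ _
    have hge2 : ((r:ℝ)/4 * Real.sqrt M) * (1/2) ≤ pev r (fab a b) := by
      calc ((r:ℝ)/4 * Real.sqrt M) * (1/2) ≤ ((r:ℝ)/4 * Real.sqrt M) * (∑' x, g x) :=
            mul_le_mul_of_nonneg_left hg_ge hcst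
        _ ≤ pev r (fab a b) := hmain
    calc Real.exp (-8)/3 * min ((r:ℝ) * Real.sqrt M) ((r:ℝ)^4)
        ≤ Real.exp (-8)/3 * ((r:ℝ) * Real.sqrt M) := by
          apply mul_le_mul_of_nonneg_left hminle (by positivity)
      _ ≤ 1/8 * ((r:ℝ) * Real.sqrt M) := by
          apply mul_le_mul_of_nonneg_right hc8 (by positivity)
      _ = ((r:ℝ)/4 * Real.sqrt M) * (1/2) := by ring
      _ ≤ pev r (fab a b) := hge2
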